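/- The ternary Cantor set generates the entire field ℝ as a ring: the subring of ℝ generated by C equals ℝ (i.e., Subring.closure C = ⊤). -/
import Mathlib

lemma preCantorSet_antitone_succ (n : ℕ) : preCantorSet (n + 1) ⊆ preCantorSet n := by
  induction n with
  | zero =>
    rintro x (⟨y, hy, rfl⟩ | ⟨y, hy, rfl⟩) <;>
      simp only [preCantorSet_zero, Set.mem_Icc] at hy ⊢ <;>
      constructor <;> linarith [hy.1, hy.2]
  | succ n ih =>
    rintro x (⟨y, hy, rfl⟩ | ⟨y, hy, rfl⟩)
    · exact Or.inl ⟨y, ih hy, rfl⟩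
    · exact Or.inr ⟨y, ih hy, rfl⟩

lemma preCantorSet_subset_Icc (n : ℕ) : preCantorSet n ⊆ Set.Icc 0 1 := by
  induction n with
  | zero => exact le_refl _
  | succ n ih => exact (preCantorSet_antitone_succ n).trans ih

lemma exists_add_eq_preCantorSet (n : ℕ) :
    ∀ y ∈ Set.Icc (0:ℝ) 1, ∃ a ∈ preCantorSet n, ∃ b ∈ preCantorSet n, a + b = 2 * y := by
  induction n with
  | zero => intro y hy; exact ⟨y, hy, y, hy, by ring⟩
  | succ n ih =>
    intro y hy
    obtain ⟨hy0, hy1⟩ := hy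
    rcases le_or_gt y (1/3) with h1 | h1
    · obtain ⟨a, ha, b, hb, hab⟩ := ih (3 * y) ⟨by linarith, by linarith⟩
      exact ⟨a / 3, Or.inl ⟨a, ha, rfl⟩, b / 3, Or.inl ⟨b, hb, rfl⟩, by
        field_simp; linarith⟩
    · rcases le_or_gt y (2/3) with h2 | h2
      · obtain ⟨a, ha, b, hb, hab⟩ := ih (3 * y - 1) ⟨by linarith, by linarith⟩
        exact ⟨a / 3, Or.inl ⟨a, ha, rfl⟩, (2 + b) / 3, Or.inr ⟨b, hb, rfl⟩, by
          field_simp; linarith⟩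
      · obtain ⟨a, ha, b, hb, hab⟩ := ih (3 * y - 2) ⟨by linarith, by linarith⟩
        exact ⟨(2 + a) / 3, Or.inr ⟨a, ha, rfl⟩, (2 + b) / 3, Or.inr ⟨b, hb, rfl⟩, by
          field_simp; linarith⟩

lemma exists_add_eq_cantorSet (y : ℝ) (hy : y ∈ Set.Icc (0:ℝ) 1) :
    ∃ a ∈ cantorSet, ∃ b ∈ cantorSet, a + b = 2 * y := by
  set K : ℕ → Set (ℝ × ℝ) := fun n =>
    {p | p.1 ∈ preCantorSet n ∧ p.2 ∈ preCantorSet n ∧ p.1 + p.2 = 2 * y} with hK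
  have hsub : ∀ n, K (n + 1) ⊆ K n := fun n p hp =>
    ⟨preCantorSet_antitone_succ n hp.1, preCantorSet_antitone_succ n hp.2.1, hp.2.2⟩
  have hne : ∀ n, (K n).Nonempty := fun n => by
    obtain ⟨a, ha, b, hb, hab⟩ := exists_add_eq_preCantorSet n y hy
    exact ⟨(a, b), ha, hb, hab⟩
  have hcl : ∀ n, IsClosed (K n) := fun n => by
    have : K n = (Prod.fst ⁻¹' preCantorSet n) ∩ (Prod.snd ⁻¹' preCantorSet n) ∩
        {p : ℝ × ℝ | p.1 + p.2 = 2 * y} := by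
      ext p; simp [hK, Set.mem_setOf_eq, and_assoc]
    rw [this]
    exact (((isClosed_preCantorSet n).preimage continuous_fst).inter
      ((isClosed_preCantorSet n).preimage continuous_snd)).inter
      (isClosed_eq (continuous_fst.add continuous_snd) continuous_const)
  have hc0 : IsCompact (K 0) := by
    refine ((isCompact_Icc (a := (0:ℝ)) (b := 1)).prod (isCompact_Icc (a := (0:ℝ)) (b := 1))).of_isClosed_subset (hcl 0) ?_
    intro p hp
    exact ⟨preCantorSet_subset_Icc 0 hp.1, preCantorSet_subset_Icc 0 hp.2.1⟩
  obtain ⟨p, hp⟩ := IsCompact.nonempty_iInter_of_sequence_nonempty_isCompact_isClosed K hsub hne hc0 hcl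
  simp only [Set.mem_iInter, hK, Set.mem_setOf_eq] at hp
  exact ⟨p.1, Set.mem_iInter.mpr fun n => (hp n).1, p.2, Set.mem_iInter.mpr fun n => (hp n).2.1,
    (hp 0).2.2⟩

theorem stmt_6 : Subring.closure cantorSet = (⊤ : Subring ℝ) := by
  rw [eq_top_iff]
  intro x _
  have hy : Int.fract (x / 2) ∈ Set.Icc (0:ℝ) 1 :=
    ⟨Int.fract_nonneg _, (Int.fract_lt_one _).le⟩
  obtain ⟨a, ha, b, hb, hab⟩ := exists_add_eq_cantorSet _ hy
  have hx : x = 2 * (⌊x / 2⌋ : ℝ) + (a + b) := by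
    rw [hab, Int.fract]
    ring
  rw [hx]
  exact add_mem (mul_mem (by exact_mod_cast natCast_mem (Subring.closure cantorSet) 2) (intCast_mem _ _))
    (add_mem (Subring.subset_closure ha) (Subring.subset_closure hb))
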